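/- Let φ = ω(z)·e_ξ(z) ∈ K[[z_1,...,z_n]] = R* with ω a polynomial and ξ ∈ K^n. Then the inverse system R ⋆ φ = {p(∂_z)(φ) : p ∈ R} equals D_ω(z)·e_ξ(z), where D_ω = span{g(∂_z)(ω) : g ∈ R}; in particular it is finite-dimensional of dimension equal to the multiplicity dim span{g(∂_x)(ω) : g ∈ R}. -/

import Mathlib

open MvPolynomial

/-- `∂^β f`: the iterated partial derivative of `f` prescribed by the multi-index `β`. -/
noncomputable def dpow {K : Type*} [CommSemiring K] {σ : Type*} (β : σ →₀ ℕ)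
    (f : MvPolynomial σ K) : MvPolynomial σ K :=
  ∑ α ∈ f.support,
    monomial (α - β) ((∏ i ∈ β.support, ((α i).descFactorial (β i) : K)) * f.coeff α)

/-- `g(∂_x)(f)`: the differential operator obtained substituting `x_i ↦ ∂/∂x_i` in `g`,
applied to `f`. -/
noncomputable def diffOp {K : Type*} [CommSemiring K] {σ : Type*}
    (g f : MvPolynomial σ K) : MvPolynomial σ K :=
  ∑ β ∈ g.support, g.coeff β • dpow β f

/-- The apolar product `⟨f,g⟩ = (1/d!) g(∂_x)(f)` of two degree-`d` forms. -/
noncomputable def apol {K : Type*} [Field K] {σ : Type*} (d : ℕ)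
    (f g : MvPolynomial σ K) : K :=
  (Nat.factorial d : K)⁻¹ * constantCoeff (diffOp g f)

/-! Iterating `x_k ⋆ (ω e_ξ) = (∂ω/∂z_k + ξ_k ω) e_ξ` over the monomials of `p` gives
`p ⋆ (ω e_ξ) = (p(x + ξ)(∂) ω) e_ξ`. As `p ↦ p(x + ξ)` is bijective, `R ⋆ φ` is the image of
`D_ω` under `θ ↦ θ e_ξ`, and this map is injective in characteristic zero: evaluating `θ e_ξ`
on `(x - ξ)^β` returns `β! θ_β`. Finally `D_ω` consists of polynomials of degree at most
`deg ω`, so it is finite-dimensional. -/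

section DescFactorial

open Finsupp

variable {σ : Type*}

/-- The coefficient in `∂^β x^α = multiDescFactorial α β • x^(α - β)`. -/
def multiDescFactorial (α β : σ →₀ ℕ) : ℕ :=
  β.prod fun i b => (α i).descFactorial b

@[simp]
lemma multiDescFactorial_zero_right (α : σ →₀ ℕ) : multiDescFactorial α 0 = 1 :=
  prod_zero_index

lemma multiDescFactorial_eq_prod_of_subset (α β : σ →₀ ℕ) {s : Finset σ}
    (hs : β.support ⊆ s) : multiDescFactorial α β = ∏ i ∈ s, (α i).descFactorial (β i) :=
  prod_of_support_subset β hs _ fun _ _ => Nat.descFactorial_zero _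

lemma multiDescFactorial_add_single (α β : σ →₀ ℕ) (i : σ) :
    multiDescFactorial α (β + single i 1) = multiDescFactorial α β * (α i - β i) := by
  classical
  set s := insert i β.support
  have hβ : β.support ⊆ s := Finset.subset_insert _ _
  have hβi : (β + single i 1).support ⊆ s :=
    support_add.trans (Finset.union_subset hβ (support_single_subset.trans (by simp [s])))
  have hrest : ∏ j ∈ s.erase i, (α j).descFactorial ((β + single i 1 : σ →₀ ℕ) j)
      = ∏ j ∈ s.erase i, (α j).descFactorial (β j) :=
    Finset.prod_congr rfl fun j hj => by simp [(Finset.ne_of_mem_erase hj).symm]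
  rw [multiDescFactorial_eq_prod_of_subset α _ hβi, multiDescFactorial_eq_prod_of_subset α _ hβ,
    ← Finset.mul_prod_erase s _ (Finset.mem_insert_self i _),
    ← Finset.mul_prod_erase s _ (Finset.mem_insert_self i _), hrest]
  simp only [Finsupp.add_apply, single_eq_same, Nat.descFactorial_succ]
  ring

lemma multiDescFactorial_eq_zero_of_lt {α β : σ →₀ ℕ} {i : σ} (h : α i < β i) :
    multiDescFactorial α β = 0 :=
  Finset.prod_eq_zero (mem_support_iff.mpr (by omega)) (Nat.descFactorial_eq_zero_iff_lt.mpr h)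

lemma multiDescFactorial_self_pos (β : σ →₀ ℕ) : 0 < multiDescFactorial β β :=
  Finset.prod_pos fun i _ => by simp [Nat.descFactorial_self, Nat.factorial_pos]

end DescFactorial

section Dpow

variable {σ K : Type*} [CommSemiring K]

lemma dpow_eq_sum_of_support_subset (β : σ →₀ ℕ) {f : MvPolynomial σ K}
    {s : Finset (σ →₀ ℕ)} (hs : f.support ⊆ s) :
    dpow β f = ∑ α ∈ s, monomial (α - β) ((multiDescFactorial α β : K) * f.coeff α) := by
  rw [dpow, Finset.sum_subset hs fun α _ hα => by simp [notMem_support_iff.mp hα]]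
  simp [multiDescFactorial, Finsupp.prod]

@[simp]
lemma dpow_monomial (β α : σ →₀ ℕ) (c : K) :
    dpow β (monomial α c) = monomial (α - β) ((multiDescFactorial α β : K) * c) := by
  classical
  rw [dpow_eq_sum_of_support_subset β (support_monomial_subset (a := c) (s := α)),
    Finset.sum_singleton, coeff_monomial, if_pos rfl]

lemma dpow_add (β : σ →₀ ℕ) (f g : MvPolynomial σ K) :
    dpow β (f + g) = dpow β f + dpow β g := by
  classical
  rw [dpow_eq_sum_of_support_subset β support_add,
    dpow_eq_sum_of_support_subset β Finset.subset_union_left,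
    dpow_eq_sum_of_support_subset β Finset.subset_union_right, ← Finset.sum_add_distrib]
  simp only [coeff_add, mul_add, map_add]

lemma dpow_smul (β : σ →₀ ℕ) (a : K) (f : MvPolynomial σ K) :
    dpow β (a • f) = a • dpow β f := by
  rw [dpow_eq_sum_of_support_subset β support_smul, dpow_eq_sum_of_support_subset β subset_rfl,
    Finset.smul_sum]
  simp only [coeff_smul, smul_monomial, smul_eq_mul, mul_left_comm a]

@[simp]
lemma dpow_zero_left (f : MvPolynomial σ K) : dpow 0 f = f := by
  induction f using MvPolynomial.induction_on' with
  | monomial α c => simp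
  | add f g hf hg => rw [dpow_add, hf, hg]

lemma dpow_add_single (β : σ →₀ ℕ) (i : σ) (f : MvPolynomial σ K) :
    dpow (β + Finsupp.single i 1) f = pderiv i (dpow β f) := by
  induction f using MvPolynomial.induction_on' with
  | monomial α c =>
    rw [dpow_monomial, dpow_monomial, pderiv_monomial, tsub_add_eq_tsub_tsub,
      multiDescFactorial_add_single, Finsupp.tsub_apply, Nat.cast_mul, mul_right_comm]
  | add f g hf hg => rw [dpow_add, dpow_add, hf, hg, map_add]

lemma constantCoeff_dpow (β : σ →₀ ℕ) (f : MvPolynomial σ K) :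
    constantCoeff (dpow β f) = multiDescFactorial β β * coeff β f := by
  classical
  rw [dpow_eq_sum_of_support_subset β (Finset.subset_insert β f.support), map_sum]
  simp only [constantCoeff_monomial, tsub_eq_zero_iff_le]
  rw [Finset.sum_eq_single_of_mem β (Finset.mem_insert_self _ _) fun α _ hne => ?_, if_pos le_rfl]
  split_ifs with hle
  · obtain ⟨i, hi⟩ : ∃ i, α i < β i := by
      by_contra! h
      exact hne (le_antisymm hle h)
    rw [multiDescFactorial_eq_zero_of_lt hi, Nat.cast_zero, zero_mul]
  · rfl

lemma totalDegree_dpow_le (β : σ →₀ ℕ) (f : MvPolynomial σ K) :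
    (dpow β f).totalDegree ≤ f.totalDegree := by
  rw [dpow_eq_sum_of_support_subset β subset_rfl]
  refine (totalDegree_finsetSum _ _).trans (Finset.sup_le fun α hα => ?_)
  exact (totalDegree_monomial_le _ _).trans
    ((Finsupp.degree_mono (tsub_le_self : α - β ≤ α)).trans (le_totalDegree hα))

end Dpow

section DiffOp

variable {σ K : Type*} [CommSemiring K]

lemma diffOp_eq_sum_of_support_subset (f : MvPolynomial σ K) {g : MvPolynomial σ K}
    {s : Finset (σ →₀ ℕ)} (hs : g.support ⊆ s) :
    diffOp g f = ∑ β ∈ s, g.coeff β • dpow β f :=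
  Finset.sum_subset hs fun β _ hβ => by rw [notMem_support_iff.mp hβ, zero_smul]

lemma diffOp_add_left (g₁ g₂ f : MvPolynomial σ K) :
    diffOp (g₁ + g₂) f = diffOp g₁ f + diffOp g₂ f := by
  classical
  rw [diffOp_eq_sum_of_support_subset f support_add,
    diffOp_eq_sum_of_support_subset f Finset.subset_union_left,
    diffOp_eq_sum_of_support_subset f Finset.subset_union_right, ← Finset.sum_add_distrib]
  simp only [coeff_add, add_smul]

lemma diffOp_smul_left (a : K) (g f : MvPolynomial σ K) :
    diffOp (a • g) f = a • diffOp g f := by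
  rw [diffOp_eq_sum_of_support_subset f support_smul, diffOp, Finset.smul_sum]
  simp only [coeff_smul, smul_eq_mul, mul_smul]

lemma diffOp_add_right (g f₁ f₂ : MvPolynomial σ K) :
    diffOp g (f₁ + f₂) = diffOp g f₁ + diffOp g f₂ := by
  simp only [diffOp, dpow_add, smul_add, Finset.sum_add_distrib]

lemma diffOp_smul_right (a : K) (g f : MvPolynomial σ K) :
    diffOp g (a • f) = a • diffOp g f := by
  simp only [diffOp, dpow_smul, Finset.smul_sum, smul_comm a]

@[simp]
lemma diffOp_zero_left (f : MvPolynomial σ K) : diffOp 0 f = 0 := by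
  simp [diffOp]

lemma diffOp_monomial_left (β : σ →₀ ℕ) (c : K) (f : MvPolynomial σ K) :
    diffOp (monomial β c) f = c • dpow β f := by
  classical
  rw [diffOp_eq_sum_of_support_subset f support_monomial_subset, Finset.sum_singleton,
    coeff_monomial, if_pos rfl]

@[simp]
lemma diffOp_C_left (a : K) (f : MvPolynomial σ K) : diffOp (C a) f = a • f := by
  rw [C_apply, diffOp_monomial_left, dpow_zero_left]

lemma diffOp_mul_X (g : MvPolynomial σ K) (i : σ) (f : MvPolynomial σ K) :
    diffOp (g * X i) f = pderiv i (diffOp g f) := by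
  induction g using MvPolynomial.induction_on' with
  | monomial β c =>
    rw [X, monomial_mul, mul_one, diffOp_monomial_left, diffOp_monomial_left, dpow_add_single,
      Derivation.map_smul]
  | add g₁ g₂ h₁ h₂ => rw [add_mul, diffOp_add_left, h₁, h₂, diffOp_add_left, map_add]

lemma diffOp_X_mul (θ : MvPolynomial σ K) (i : σ) (q : MvPolynomial σ K) :
    diffOp θ (X i * q) = X i * diffOp θ q + diffOp (pderiv i θ) q := by
  induction θ using MvPolynomial.induction_on with
  | C a => simp
  | add θ₁ θ₂ h₁ h₂ =>
    simp only [diffOp_add_left, h₁, h₂, map_add]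
    ring
  | mul_X θ k h =>
    have hδ : pderiv k (X i) * diffOp θ q = diffOp (θ * pderiv i (X k)) q := by
      rcases eq_or_ne i k with rfl | hik
      · simp
      · simp [pderiv_X_of_ne hik, pderiv_X_of_ne hik.symm]
    simp only [diffOp_mul_X, h, map_add, Derivation.leibniz, smul_eq_mul, diffOp_add_left]
    rw [mul_comm (X k), diffOp_mul_X, ← hδ]
    ring

lemma constantCoeff_diffOp_monomial (θ : MvPolynomial σ K) (β : σ →₀ ℕ) :
    constantCoeff (diffOp θ (monomial β 1)) = coeff β θ * multiDescFactorial β β := by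
  classical
  rw [diffOp_eq_sum_of_support_subset _ (Finset.subset_insert β θ.support), map_sum]
  simp only [constantCoeff_smul, constantCoeff_dpow, coeff_monomial, smul_eq_mul, mul_ite,
    mul_one, mul_zero, Finset.sum_ite_eq, Finset.mem_insert_self, if_true]

lemma totalDegree_diffOp_le (g f : MvPolynomial σ K) :
    (diffOp g f).totalDegree ≤ f.totalDegree :=
  (totalDegree_finsetSum _ _).trans <| Finset.sup_le fun β _ =>
    (totalDegree_smul_le _ _).trans (totalDegree_dpow_le β f)

variable (K) in
noncomputable def diffOpBilin : MvPolynomial σ K →ₗ[K] MvPolynomial σ K →ₗ[K] MvPolynomial σ K :=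
  LinearMap.mk₂ K diffOp diffOp_add_left diffOp_smul_left diffOp_add_right diffOp_smul_right

@[simp]
lemma diffOpBilin_apply (g f : MvPolynomial σ K) : diffOpBilin K g f = diffOp g f := rfl

end DiffOp

namespace MvPolynomial

variable {σ K : Type*} [CommSemiring K]

noncomputable def taylor (c : σ → K) : MvPolynomial σ K →ₐ[K] MvPolynomial σ K :=
  aeval fun i => X i + C (c i)

@[simp]
lemma taylor_X (c : σ → K) (i : σ) : taylor c (X i) = X i + C (c i) :=
  aeval_X _ i

lemma eval_taylor (ξ c : σ → K) (p : MvPolynomial σ K) :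
    eval ξ (taylor c p) = eval (ξ + c) p := by
  induction p using MvPolynomial.induction_on with
  | C a => simp [taylor]
  | add p q hp hq => simp only [map_add, hp, hq]
  | mul_X p i hp => simp [hp]

lemma pderiv_taylor (c : σ → K) (i : σ) (p : MvPolynomial σ K) :
    pderiv i (taylor c p) = taylor c (pderiv i p) := by
  induction p using MvPolynomial.induction_on with
  | C a => simp [taylor]
  | add p q hp hq => simp only [map_add, hp, hq]
  | mul_X p j hp =>
    have hXj : taylor c (pderiv i (X j)) = pderiv i (X j) := by
      rcases eq_or_ne j i with rfl | hji <;> simp [*]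
    simp only [map_mul, Derivation.leibniz, hp, taylor_X, map_add, pderiv_C, add_zero,
      smul_eq_mul, hXj]

lemma taylor_taylor_neg {R : Type*} [CommRing R] (c : σ → R) (p : MvPolynomial σ R) :
    taylor c (taylor (-c) p) = p := by
  induction p using MvPolynomial.induction_on with
  | C a => simp [taylor]
  | add p q hp hq => simp only [map_add, hp, hq]
  | mul_X p i hp => simp [hp]

end MvPolynomial

section Taylor

variable {σ K : Type*} [CommSemiring K]

lemma diffOp_taylor (c : σ → K) (θ q : MvPolynomial σ K) :
    diffOp θ (taylor c q) = taylor c (diffOp θ q) := by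
  induction θ using MvPolynomial.induction_on with
  | C a => simp
  | add θ₁ θ₂ h₁ h₂ => simp only [diffOp_add_left, h₁, h₂, map_add]
  | mul_X θ k h => rw [diffOp_mul_X, h, pderiv_taylor, diffOp_mul_X]

lemma eval_diffOp_mul (ξ : σ → K) (ω p q : MvPolynomial σ K) :
    eval ξ (diffOp ω (p * q)) = eval ξ (diffOp (diffOp (taylor ξ p) ω) q) := by
  induction p using MvPolynomial.induction_on generalizing q with
  | C a => simp [← smul_eq_C_mul, diffOp_smul_left, diffOp_smul_right]
  | add p₁ p₂ h₁ h₂ => simp only [add_mul, diffOp_add_right, map_add, h₁, h₂, diffOp_add_left]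
  | mul_X p i h =>
    rw [mul_assoc, h, diffOp_X_mul, map_mul, taylor_X, mul_add, diffOp_add_left, diffOp_mul_X,
      mul_comm _ (C _), ← smul_eq_C_mul, diffOp_smul_left, diffOp_add_left, diffOp_smul_left]
    simp [add_comm]

end Taylor

section PolyExp

variable {σ K : Type*} [CommSemiring K]

/-- `θ(z)e_ξ(z) ∈ R*`, acting on `R = K[x]` by `q ↦ (θ(∂)q)(ξ)`. -/
noncomputable def polyExp (ξ : σ → K) :
    MvPolynomial σ K →ₗ[K] Module.Dual K (MvPolynomial σ K) :=
  (diffOpBilin K).compr₂ (aeval ξ).toLinearMap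

@[simp]
lemma polyExp_apply (ξ : σ → K) (θ q : MvPolynomial σ K) :
    polyExp ξ θ q = eval ξ (diffOp θ q) := by
  simp [polyExp]

lemma polyExp_comp_mulLeft (ξ : σ → K) (ω p : MvPolynomial σ K) :
    polyExp ξ ω ∘ₗ LinearMap.mulLeft K p = polyExp ξ (diffOp (taylor ξ p) ω) :=
  LinearMap.ext fun q => by simp [eval_diffOp_mul]

noncomputable def inverseSystem (ω : MvPolynomial σ K) : Submodule K (MvPolynomial σ K) :=
  LinearMap.range ((diffOpBilin K).flip ω)

lemma mem_inverseSystem {ω θ : MvPolynomial σ K} :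
    θ ∈ inverseSystem ω ↔ ∃ g, diffOp g ω = θ :=
  Iff.rfl

end PolyExp

instance {σ K : Type*} [Field K] [Finite σ] (ω : MvPolynomial σ K) :
    Module.Finite K (inverseSystem ω) :=
  Submodule.finiteDimensional_of_le (S₂ := restrictTotalDegree σ K ω.totalDegree) <| by
    rintro _ ⟨g, rfl⟩
    exact (mem_restrictTotalDegree _ _ _).mpr (totalDegree_diffOp_le g ω)

section Ring

variable {σ K : Type*} [CommRing K]

lemma setOf_polyExp_comp_mulLeft (ξ : σ → K) (ω : MvPolynomial σ K) :
    {ψ | ∃ p, ψ = polyExp ξ ω ∘ₗ LinearMap.mulLeft K p} = (inverseSystem ω).map (polyExp ξ) := by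
  ext ψ
  simp only [Set.mem_ofPred_eq, Submodule.map_coe, Set.mem_image, SetLike.mem_coe,
    mem_inverseSystem, polyExp_comp_mulLeft]
  constructor
  · rintro ⟨p, rfl⟩
    exact ⟨_, ⟨_, rfl⟩, rfl⟩
  · rintro ⟨_, ⟨g, rfl⟩, rfl⟩
    exact ⟨taylor (-ξ) g, by rw [taylor_taylor_neg]⟩

lemma polyExp_injective [IsDomain K] [CharZero K] (ξ : σ → K) :
    Function.Injective (polyExp ξ) := by
  refine (injective_iff_map_eq_zero _).mpr fun θ hθ => MvPolynomial.ext _ _ fun β => ?_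
  have h := LinearMap.congr_fun hθ (taylor (-ξ) (monomial β 1))
  rw [polyExp_apply, diffOp_taylor, eval_taylor, add_neg_cancel, eval_zero,
    constantCoeff_diffOp_monomial, LinearMap.zero_apply] at h
  exact (mul_eq_zero.mp h).resolve_right (Nat.cast_ne_zero.mpr (multiDescFactorial_self_pos β).ne')

end Ring

/-- Let `φ = ω(z)e_ξ(z) ∈ K[[z]] = R*` be the polynomial-exponential
functional `p ↦ (ω(∂_x)p)(ξ)` (hypothesized as the bundled functional `Φ` with pointwise
description `hΦ`, and similarly `PE θ` for `θ(z)e_ξ(z)`). Then the inverse system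
`R ⋆ φ = {p ⋆ φ : p ∈ R}` (where `p ⋆ φ = φ ∘ M_p`) equals `D_ω(z)·e_ξ(z)` for the
inverse system `D_ω = {g(∂)(ω) : g ∈ R}`; in particular it is finite-dimensional, of
dimension equal to the multiplicity `dim span{g(∂_x)(ω) : g ∈ R}` of `ω`. -/
theorem invsys_polyExp {K : Type*} [Field K] [CharZero K] {n : ℕ}
    (ω : MvPolynomial (Fin n) K) (ξ : Fin n → K)
    (PE : MvPolynomial (Fin n) K → Module.Dual K (MvPolynomial (Fin n) K))
    (hPE : ∀ θ q : MvPolynomial (Fin n) K, PE θ q = eval ξ (diffOp θ q))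
    (Φ : Module.Dual K (MvPolynomial (Fin n) K)) (hΦ : Φ = PE ω) :
    ({ψ : Module.Dual K (MvPolynomial (Fin n) K) |
        ∃ p : MvPolynomial (Fin n) K, ψ = Φ ∘ₗ LinearMap.mulLeft K p}
      = PE '' {θ : MvPolynomial (Fin n) K | ∃ g : MvPolynomial (Fin n) K, θ = diffOp g ω}) ∧
    Module.Finite K ↥(Submodule.span K
      {ψ : Module.Dual K (MvPolynomial (Fin n) K) |
        ∃ p : MvPolynomial (Fin n) K, ψ = Φ ∘ₗ LinearMap.mulLeft K p}) ∧
    Module.finrank K ↥(Submodule.span K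
        {ψ : Module.Dual K (MvPolynomial (Fin n) K) |
          ∃ p : MvPolynomial (Fin n) K, ψ = Φ ∘ₗ LinearMap.mulLeft K p})
      = Module.finrank K ↥(Submodule.span K
        {θ : MvPolynomial (Fin n) K | ∃ g : MvPolynomial (Fin n) K, θ = diffOp g ω}) := by
  obtain rfl : PE = polyExp ξ := funext fun θ => LinearMap.ext fun q => by rw [hPE, polyExp_apply]
  subst hΦ
  have hD : {θ | ∃ g, θ = diffOp g ω} = (inverseSystem ω : Set (MvPolynomial (Fin n) K)) := by
    ext θ
    simp only [Set.mem_ofPred_eq, SetLike.mem_coe, mem_inverseSystem, eq_comm]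
  rw [setOf_polyExp_comp_mulLeft, hD, Submodule.span_eq, Submodule.span_eq]
  exact ⟨Submodule.map_coe _ _, inferInstance,
    (Submodule.equivMapOfInjective _ (polyExp_injective ξ) _).symm.finrank_eq⟩
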